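/- Suppose every eigenvalue μ of C possessing an eigenvector orthogonal to the all-ones vector satisfies |μ| ≤ d − β, where 0 < β ≤ d − 1 − √(d−1). Let a ∈ ℂ^n with Σ_{v=1}^n a_v = 0 and set f = Σ_{v=1}^n a_v e_v ∈ ℂ^{2B}. Then for every integer t ≥ 1, ‖M^t f‖_{ℂ^{2B}} ≤ 2 ‖f‖_{ℂ^{2B}} · t · ( (d−1−β)/(d−1) )^{t−1}. -/

import Mathlib

open scoped BigOperators

/-- The classical transition matrix `M` on directed bonds: `M_{bc} = 1/(d-1)` if the head of
`b` equals the tail of `c` and `c` is not the reversal of `b`, and `0` otherwise. -/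
noncomputable def transM {V : Type} [DecidableEq V] (G : SimpleGraph V) (d : ℕ) :
    Matrix G.Dart G.Dart ℂ := fun b c =>
  if b.snd = c.fst ∧ c ≠ b.symm then ((d : ℂ) - 1)⁻¹ else 0

/-- `e_v`: indicator vector of the directed bonds with tail `v`, as an element of the
Euclidean (ℓ²) space `ℂ^{2B}`. -/
noncomputable def eVec {V : Type} [Fintype V] [DecidableEq V] (G : SimpleGraph V)
    [DecidableRel G.Adj] (v : V) : EuclideanSpace ℂ G.Dart :=
  WithLp.toLp 2 (fun b => if b.fst = v then 1 else 0)

/-- The adjacency (connectivity) matrix of `G`, over `ℂ`. -/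
def adjC {V : Type} (G : SimpleGraph V) [DecidableRel G.Adj] : Matrix V V ℂ :=
  fun v w => if G.Adj v w then 1 else 0

/-- A matrix acting on Euclidean (ℓ²) space by matrix-vector multiplication. -/
noncomputable def act {ι : Type} [Fintype ι] (A : Matrix ι ι ℂ) (x : EuclideanSpace ℂ ι) :
    EuclideanSpace ℂ ι :=
  (WithLp.equiv 2 (ι → ℂ)).symm (A.mulVec (WithLp.equiv 2 (ι → ℂ) x))

/-!
Write `f = S a`, where `S` (`tailLift`) lifts a vertex function to the darts through their tails
and `T` (`headLift`) through their heads. On a `d`-regular graph `M S x = T x` and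
`M T x = (T (C x) - S x) / (d - 1)`, hence `M^(s+1) S a = T x_(s+1) - S x_s / (d - 1)` with
`x_s = U_s(C / (d - 1), 1 / (d - 1)) a`, `U_s` the Lucas sequence (`adjSeq`); both lifts scale
norms by `√d`. In an orthonormal eigenbasis of `C`, since `∑ a = 0` only eigenvalues `μ` with an
eigenvector orthogonal to the constants contribute, so `|μ| ≤ d - β`. For such `μ` both roots of
`z² - μ z / (d - 1) + 1 / (d - 1)` have modulus at most `ρ = (d - 1 - β) / (d - 1)`; this is where
`β ≤ d - 1 - √(d - 1)`, i.e. `1 / (d - 1) ≤ ρ²`, enters. Hence `|U_s| ≤ s ρ^(s-1)`.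
-/

open Finset Matrix

section Lucas

variable {R : Type*} [CommRing R]

def lucasU (p q : R) : ℕ → R
  | 0 => 0
  | 1 => 1
  | n + 2 => p * lucasU p q (n + 1) - q * lucasU p q n

theorem lucasU_eq_geom_sum₂ {p q x y : R} (hp : x + y = p) (hq : x * y = q) :
    ∀ n, lucasU p q n = ∑ i ∈ range n, x ^ i * y ^ (n - 1 - i)
  | 0 => by simp [lucasU]
  | 1 => by simp [lucasU]
  | n + 2 => by
    have h₁ := geom_sum₂_succ_eq x y (n := n)
    have h₂ := geom_sum₂_succ_eq x y (n := n + 1)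
    rw [lucasU, lucasU_eq_geom_sum₂ hp hq (n + 1), lucasU_eq_geom_sum₂ hp hq n,
      Nat.add_sub_cancel, show n + 2 - 1 = n + 1 by omega, h₂, Nat.add_sub_cancel, h₁, ← hp, ← hq]
    ring

end Lucas

theorem norm_geom_sum₂_le {K : Type*} [NormedField K] {x y : K} {ρ : ℝ} (hx : ‖x‖ ≤ ρ)
    (hy : ‖y‖ ≤ ρ) (n : ℕ) : ‖∑ i ∈ range n, x ^ i * y ^ (n - 1 - i)‖ ≤ n * ρ ^ (n - 1) := by
  have hρ : 0 ≤ ρ := (norm_nonneg x).trans hx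
  calc ‖∑ i ∈ range n, x ^ i * y ^ (n - 1 - i)‖
      ≤ ∑ i ∈ range n, ‖x‖ ^ i * ‖y‖ ^ (n - 1 - i) := by
        refine (norm_sum_le _ _).trans_eq ?_
        simp only [norm_mul, norm_pow]
    _ ≤ ∑ i ∈ range n, ρ ^ i * ρ ^ (n - 1 - i) := by gcongr
    _ = n * ρ ^ (n - 1) := geom_sum₂_self ρ n

theorem exists_quadratic_roots_norm_le {p q ρ : ℝ} (hρ : 0 < ρ) (hqρ : q ≤ ρ ^ 2)
    (hp : |p| * ρ ≤ ρ ^ 2 + q) :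
    ∃ x y : ℂ, x + y = p ∧ x * y = q ∧ ‖x‖ ≤ ρ ∧ ‖y‖ ≤ ρ := by
  rcases lt_or_ge (p ^ 2 - 4 * q) 0 with hΔ | hΔ
  · set z : ℂ := ⟨p / 2, √(4 * q - p ^ 2) / 2⟩
    have hz : Complex.normSq z = q := by
      rw [Complex.normSq_mk]
      linear_combination Real.sq_sqrt (by linarith : 0 ≤ 4 * q - p ^ 2) / 4
    have hzρ : ‖z‖ ≤ ρ := by
      rw [← pow_le_pow_iff_left₀ (norm_nonneg z) hρ.le two_ne_zero, Complex.sq_norm, hz]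
      exact hqρ
    refine ⟨z, (starRingEnd ℂ) z, ?_, ?_, hzρ, by rwa [Complex.norm_conj]⟩
    · rw [Complex.add_conj]; push_cast [z]; ring
    · rw [Complex.mul_conj, hz]
  · set r := √(p ^ 2 - 4 * q)
    have hr : r ^ 2 = p ^ 2 - 4 * q := Real.sq_sqrt hΔ
    -- `(ρ - x) (ρ - y) ≥ 0`, `(ρ + x) (ρ + y) ≥ 0` and `|x + y| ≤ 2 ρ` confine `x` to `[-ρ, ρ]`.
    have hroot : ∀ x y : ℝ, x + y = p → x * y = q → |x| ≤ ρ := by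
      rintro x y rfl rfl
      have hp' : |x + y| ≤ 2 * ρ := by nlinarith
      rw [abs_le] at hp' ⊢
      constructor <;> nlinarith [le_abs_self (x + y), neg_abs_le (x + y)]
    refine ⟨((p + r) / 2 : ℝ), ((p - r) / 2 : ℝ), by push_cast; ring, ?_, ?_, ?_⟩
    · rw [← Complex.ofReal_mul]; congr 1; linear_combination -hr / 4
    · rw [Complex.norm_real, Real.norm_eq_abs]
      exact hroot _ ((p - r) / 2) (by ring) (by linear_combination -hr / 4)
    · rw [Complex.norm_real, Real.norm_eq_abs]
      exact hroot _ ((p + r) / 2) (by ring) (by linear_combination -hr / 4)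

theorem norm_lucasU_ofReal_le {p q ρ : ℝ} (hρ : 0 < ρ) (hqρ : q ≤ ρ ^ 2)
    (hp : |p| * ρ ≤ ρ ^ 2 + q) (n : ℕ) : ‖lucasU (p : ℂ) q n‖ ≤ n * ρ ^ (n - 1) := by
  obtain ⟨x, y, hxy, hxy', hx, hy⟩ := exists_quadratic_roots_norm_le hρ hqρ hp
  rw [lucasU_eq_geom_sum₂ hxy hxy']
  exact norm_geom_sum₂_le hx hy n

section LucasSeq

variable {R E : Type*} [CommRing R] [AddCommGroup E] [Module R E]

def lucasSeq (P : E →ₗ[R] E) (q : R) (x : E) : ℕ → E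
  | 0 => 0
  | 1 => x
  | n + 2 => P (lucasSeq P q x (n + 1)) - q • lucasSeq P q x n

theorem lucasSeq_sum_smul {ι : Type*} [Fintype ι] {P : E →ₗ[R] E} (q : R) {u : ι → E}
    {μ : ι → R} (hu : ∀ i, P (u i) = μ i • u i) (c : ι → R) :
    ∀ n, lucasSeq P q (∑ i, c i • u i) n = ∑ i, (lucasU (μ i) q n * c i) • u i
  | 0 => by simp [lucasSeq, lucasU]
  | 1 => by simp [lucasSeq, lucasU]
  | n + 2 => by
    rw [lucasSeq, lucasSeq_sum_smul q hu c (n + 1), lucasSeq_sum_smul q hu c n, map_sum,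
      smul_sum, ← sum_sub_distrib]
    refine sum_congr rfl fun i _ => ?_
    rw [map_smul, hu, lucasU]
    module

end LucasSeq

theorem OrthonormalBasis.norm_sum_mul_repr_smul_le {ι 𝕜 E : Type*} [Fintype ι] [RCLike 𝕜]
    [NormedAddCommGroup E] [InnerProductSpace 𝕜 E] (b : OrthonormalBasis ι 𝕜 E) (x : E)
    {f : ι → 𝕜} {K : ℝ} (hK : 0 ≤ K) (hf : ∀ i, b.repr x i ≠ 0 → ‖f i‖ ≤ K) :
    ‖∑ i, (f i * b.repr x i) • b i‖ ≤ K * ‖x‖ := by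
  rw [show ∑ i, (f i * b.repr x i) • b i = b.repr.symm (WithLp.toLp 2 fun i => f i * b.repr x i)
      from b.sum_repr_symm (WithLp.toLp 2 fun i => f i * b.repr x i), LinearIsometryEquiv.norm_map,
    ← b.repr.norm_map x, EuclideanSpace.norm_eq, EuclideanSpace.norm_eq, ← Real.sqrt_sq hK,
    ← Real.sqrt_mul (sq_nonneg K), mul_sum]
  gcongr with i
  by_cases hi : b.repr x i = 0
  · simp [hi]
  · rw [norm_mul, mul_pow]
    gcongr
    exact hf i hi

theorem norm_lucasSeq_le {E : Type*} [NormedAddCommGroup E] [InnerProductSpace ℂ E]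
    [FiniteDimensional ℂ E] {P : E →ₗ[ℂ] E} (hP : P.IsSymmetric) {q ρ : ℝ} (hρ : 0 < ρ)
    (hqρ : q ≤ ρ ^ 2) (x : E)
    (hspec : ∀ (μ : ℝ) (u : E), P u = (μ : ℂ) • u → inner ℂ u x ≠ 0 → |μ| * ρ ≤ ρ ^ 2 + q)
    (n : ℕ) : ‖lucasSeq P (q : ℂ) x n‖ ≤ n * ρ ^ (n - 1) * ‖x‖ := by
  have hb := hP.apply_eigenvectorBasis rfl
  nth_rewrite 1 [← (hP.eigenvectorBasis rfl).sum_repr x]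
  rw [lucasSeq_sum_smul _ hb]
  refine (hP.eigenvectorBasis rfl).norm_sum_mul_repr_smul_le x (by positivity) fun i hi => ?_
  refine norm_lucasU_ofReal_le hρ hqρ (hspec _ _ (hb i) ?_) n
  rwa [← OrthonormalBasis.repr_apply_apply]

theorem decay_rate_bounds {D β : ℝ} (hD : 0 < D) (hβ : 0 < β) (hβ' : β ≤ D - √D) :
    0 < (D - β) / D ∧ (D - β) / D ≤ 1 ∧ D⁻¹ ≤ ((D - β) / D) ^ 2 := by
  have hsqrt : √D ^ 2 = D := Real.sq_sqrt hD.le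
  have hsqrt0 : 0 < √D := Real.sqrt_pos.mpr hD
  refine ⟨div_pos (by linarith) hD, (div_le_one hD).mpr (by linarith), ?_⟩
  have hsq : D ≤ (D - β) ^ 2 := by nlinarith
  rw [div_pow, inv_eq_one_div, div_le_div_iff₀ hD (by positivity)]
  nlinarith

theorem add_mul_le_two_mul_pow {r ρ N y z : ℝ} {s : ℕ} (hρ : 0 ≤ ρ) (hρ1 : ρ ≤ 1) (hr : 0 ≤ r)
    (hrρ : r ≤ ρ ^ 2) (hN : 0 ≤ N) (hy : y ≤ (s + 1 : ℕ) * ρ ^ s * N)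
    (hz : z ≤ s * ρ ^ (s - 1) * N) : y + r * z ≤ 2 * N * (s + 1 : ℕ) * ρ ^ s := by
  have hpow : r * (s * ρ ^ (s - 1)) ≤ (s + 1 : ℕ) * ρ ^ s := by
    rcases s with _ | s
    · simp
    · have hρs : ρ ^ 2 * ρ ^ s ≤ ρ ^ (s + 1) := by
        rw [← pow_add]
        exact pow_le_pow_of_le_one hρ hρ1 (by omega)
      calc r * ((s + 1 : ℕ) * ρ ^ s) ≤ ρ ^ 2 * ((s + 1 : ℕ) * ρ ^ s) := by gcongr
        _ ≤ (s + 1 + 1 : ℕ) * ρ ^ (s + 1) := by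
          push_cast
          nlinarith [pow_nonneg hρ (s + 1)]
  nlinarith [mul_le_mul_of_nonneg_left hz hr, mul_le_mul_of_nonneg_right hpow hN]

theorem act_apply {ι : Type} [Fintype ι] (A : Matrix ι ι ℂ) (x : EuclideanSpace ℂ ι) (i : ι) :
    act A x i = (A *ᵥ x) i := rfl

theorem act_mul {ι : Type} [Fintype ι] (A B : Matrix ι ι ℂ) (x : EuclideanSpace ℂ ι) :
    act (A * B) x = act A (act B x) := by
  ext i
  simp only [act_apply, ← mulVec_mulVec]
  rfl

theorem act_sub {ι : Type} [Fintype ι] (A : Matrix ι ι ℂ) (x y : EuclideanSpace ℂ ι) :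
    act A (x - y) = act A x - act A y := by
  ext i
  simp [act_apply, mulVec_sub]

theorem act_smul {ι : Type} [Fintype ι] (A : Matrix ι ι ℂ) (c : ℂ) (x : EuclideanSpace ℂ ι) :
    act A (c • x) = c • act A x := by
  ext i
  simp [act_apply, mulVec_smul]

-- `u` minus its mean `k` works: summing `A u = μ u` gives `d k = μ k`, and a constant `u` would
-- be orthogonal to `a`.
theorem exists_sum_eq_zero_eigenvector {V : Type} [Fintype V] {A : Matrix V V ℂ} {d μ : ℂ}
    (hrow : ∀ v, ∑ w, A v w = d) (hcol : ∀ w, ∑ v, A v w = d) {u a : V → ℂ}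
    (hu : A *ᵥ u = μ • u) (ha : ∑ v, a v = 0) (hua : a ⬝ᵥ star u ≠ 0) :
    ∃ x ≠ 0, A *ᵥ x = μ • x ∧ ∑ v, x v = 0 := by
  have hV : (Fintype.card V : ℂ) ≠ 0 := by
    obtain ⟨v, -, -⟩ := exists_ne_zero_of_sum_ne_zero hua
    have : Nonempty V := ⟨v⟩
    exact Nat.cast_ne_zero.mpr Fintype.card_ne_zero
  set k := (∑ v, u v) / Fintype.card V
  have hcolsum : ∑ v, (A *ᵥ u) v = d * ∑ v, u v := by
    simp only [mulVec, dotProduct]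
    rw [sum_comm, mul_sum]
    exact sum_congr rfl fun w _ => by rw [← sum_mul, hcol]
  have hk : d * k = μ * k := by
    simp only [k, ← mul_div_assoc, ← hcolsum, hu, Pi.smul_apply, smul_eq_mul, mul_sum]
  have hconst : A *ᵥ (fun _ => k) = d • fun _ => k := by
    ext v
    simp [mulVec, dotProduct, ← sum_mul, hrow]
  refine ⟨u - fun _ => k, fun h => hua ?_, ?_, ?_⟩
  · rw [sub_eq_zero.mp h]
    simp [dotProduct, ← sum_mul, ha]
  · rw [mulVec_sub, hu, hconst, smul_sub]
    ext v
    simp [hk]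
  · simp [sum_sub_distrib, k, mul_div_cancel₀ _ hV]

section Graph

variable {V : Type} (G : SimpleGraph V)

noncomputable def tailLift : EuclideanSpace ℂ V →ₗ[ℂ] EuclideanSpace ℂ G.Dart where
  toFun x := WithLp.toLp 2 fun b => x b.fst
  map_add' _ _ := rfl
  map_smul' _ _ := rfl

noncomputable def headLift : EuclideanSpace ℂ V →ₗ[ℂ] EuclideanSpace ℂ G.Dart where
  toFun x := WithLp.toLp 2 fun b => x b.snd
  map_add' _ _ := rfl
  map_smul' _ _ := rfl

@[simp]
theorem tailLift_apply (x : EuclideanSpace ℂ V) (b : G.Dart) : tailLift G x b = x b.fst := rfl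

@[simp]
theorem headLift_apply (x : EuclideanSpace ℂ V) (b : G.Dart) : headLift G x b = x b.snd := rfl

variable [DecidableRel G.Adj]

theorem adjC_isHermitian : (adjC G).IsHermitian := by
  ext v w
  simp [adjC, G.adj_comm]

variable [Fintype V]

theorem norm_headLift (x : EuclideanSpace ℂ V) : ‖headLift G x‖ = ‖tailLift G x‖ := by
  rw [EuclideanSpace.norm_eq, EuclideanSpace.norm_eq]
  congr 1
  exact Fintype.sum_equiv (Function.Involutive.toPerm _ SimpleGraph.Dart.symm_involutive) _ _
    fun b => rfl

theorem sum_adjC_row {d : ℕ} (hreg : G.IsRegularOfDegree d) (v : V) : ∑ w, adjC G v w = d := by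
  simp [adjC, ← SimpleGraph.neighborFinset_eq_filter, hreg v]

theorem norm_le_of_adjC_eigenvector {d : ℕ} (hreg : G.IsRegularOfDegree d) {K : ℝ}
    (hspec : ∀ (μ : ℂ) (x : V → ℂ), x ≠ 0 → adjC G *ᵥ x = μ • x → ∑ v, x v = 0 → ‖μ‖ ≤ K)
    {a : V → ℂ} (ha : ∑ v, a v = 0) {μ : ℂ} {u : V → ℂ} (hu : adjC G *ᵥ u = μ • u)
    (hua : a ⬝ᵥ star u ≠ 0) : ‖μ‖ ≤ K := by
  have hcol (w : V) : ∑ v, adjC G v w = d := by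
    simpa [adjC, G.adj_comm] using sum_adjC_row G hreg w
  obtain ⟨x, hx, hxμ, hxsum⟩ :=
    exists_sum_eq_zero_eigenvector (sum_adjC_row G hreg) hcol hu ha hua
  exact hspec μ x hx hxμ hxsum

variable [DecidableEq V]

theorem sum_smul_eVec (a : V → ℂ) : ∑ v, a v • eVec G v = tailLift G (WithLp.toLp 2 a) := by
  ext b
  simp [eVec]

theorem norm_tailLift {d : ℕ} (hreg : G.IsRegularOfDegree d) (x : EuclideanSpace ℂ V) :
    ‖tailLift G x‖ = √d * ‖x‖ := by
  rw [EuclideanSpace.norm_eq, EuclideanSpace.norm_eq, ← Real.sqrt_mul (Nat.cast_nonneg d),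
    ← sum_fiberwise univ fun b : G.Dart => b.fst, mul_sum]
  congr 1
  refine sum_congr rfl fun v _ => ?_
  rw [sum_congr rfl fun b hb => by rw [tailLift_apply, (mem_filter.mp hb).2], sum_const,
    G.dart_fst_fiber_card_eq_degree, hreg, nsmul_eq_mul]

theorem sum_fst_eq_adjC_mulVec (x : V → ℂ) (v : V) :
    ∑ b : G.Dart with b.fst = v, x b.snd = (adjC G *ᵥ x) v := by
  rw [G.dart_fst_fiber, sum_image fun _ _ _ _ h => G.dartOfNeighborSet_injective v h]
  have hadj : (adjC G *ᵥ x) v = ∑ w ∈ G.neighborFinset v, x w := by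
    simp [mulVec, dotProduct, adjC, ← sum_filter, SimpleGraph.neighborFinset_eq_filter]
  rw [hadj, sum_subtype (G.neighborFinset v) (fun w => G.mem_neighborFinset v w) x]
  rfl

theorem transM_mulVec (d : ℕ) (y : G.Dart → ℂ) (b : G.Dart) :
    (transM G d *ᵥ y) b =
      ((d : ℂ) - 1)⁻¹ * ∑ c ∈ ({c | c.fst = b.snd} : Finset G.Dart).erase b.symm, y c := by
  simp only [transM, mulVec, dotProduct, ite_mul, zero_mul, ← sum_filter, mul_sum]
  congr 1
  ext c
  simp [and_comm, eq_comm]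

theorem act_transM_tailLift {d : ℕ} (hd : d ≠ 1) (hreg : G.IsRegularOfDegree d)
    (x : EuclideanSpace ℂ V) : act (transM G d) (tailLift G x) = headLift G x := by
  ext b
  have hsymm : b.symm ∈ ({c | c.fst = b.snd} : Finset G.Dart) := by simp
  have hfiber : ∑ c ∈ ({c | c.fst = b.snd} : Finset G.Dart), x c.fst = d * x b.snd := by
    rw [sum_congr rfl fun c hc => by rw [(mem_filter.mp hc).2], sum_const,
      G.dart_fst_fiber_card_eq_degree, hreg, nsmul_eq_mul]
  have hd' : (d : ℂ) - 1 ≠ 0 := sub_ne_zero.mpr (by exact_mod_cast hd)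
  rw [act_apply, transM_mulVec, sum_erase_eq_sub hsymm]
  simp only [tailLift_apply, headLift_apply, hfiber]
  rw [show x b.symm.fst = x b.snd from rfl]
  field_simp

theorem act_transM_headLift (d : ℕ) (x : EuclideanSpace ℂ V) :
    act (transM G d) (headLift G x) =
      ((d : ℂ) - 1)⁻¹ • (headLift G (act (adjC G) x) - tailLift G x) := by
  ext b
  have hsymm : b.symm ∈ ({c | c.fst = b.snd} : Finset G.Dart) := by simp
  rw [act_apply, transM_mulVec, sum_erase_eq_sub hsymm]
  simp [sum_fst_eq_adjC_mulVec, act_apply]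

noncomputable def adjSeq (d : ℕ) (x : EuclideanSpace ℂ V) : ℕ → EuclideanSpace ℂ V :=
  lucasSeq (((d : ℂ) - 1)⁻¹ • Matrix.toLpLin 2 2 (adjC G)) ((((d : ℝ) - 1)⁻¹ : ℝ) : ℂ) x

theorem adjSeq_add_two (d : ℕ) (x : EuclideanSpace ℂ V) (s : ℕ) :
    adjSeq G d x (s + 2) =
      ((d : ℂ) - 1)⁻¹ • (act (adjC G) (adjSeq G d x (s + 1)) - adjSeq G d x s) := by
  rw [adjSeq, lucasSeq, smul_sub, LinearMap.smul_apply]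
  push_cast
  rfl

theorem act_transM_pow_succ_tailLift {d : ℕ} (hd : d ≠ 1) (hreg : G.IsRegularOfDegree d)
    (x : EuclideanSpace ℂ V) :
    ∀ s, act (transM G d ^ (s + 1)) (tailLift G x) =
      headLift G (adjSeq G d x (s + 1)) - ((d : ℂ) - 1)⁻¹ • tailLift G (adjSeq G d x s)
  | 0 => by
    rw [pow_one, act_transM_tailLift G hd hreg]
    simp [adjSeq, lucasSeq]
  | s + 1 => by
    rw [pow_succ', act_mul, act_transM_pow_succ_tailLift hd hreg x s, act_sub, act_smul,
      act_transM_headLift, act_transM_tailLift G hd hreg, adjSeq_add_two, map_smul, map_sub]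
    module

theorem norm_adjSeq_le {d : ℕ} (hd : 3 ≤ d) (hreg : G.IsRegularOfDegree d) {β : ℝ} (hβ : 0 < β)
    (hβ' : β ≤ (d : ℝ) - 1 - √((d : ℝ) - 1))
    (hspec : ∀ (μ : ℂ) (x : V → ℂ), x ≠ 0 → adjC G *ᵥ x = μ • x → ∑ v, x v = 0 → ‖μ‖ ≤ d - β)
    {a : V → ℂ} (ha : ∑ v, a v = 0) (n : ℕ) :
    ‖adjSeq G d (WithLp.toLp 2 a) n‖ ≤
      n * (((d : ℝ) - 1 - β) / ((d : ℝ) - 1)) ^ (n - 1) * ‖WithLp.toLp 2 a‖ := by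
  have hD : (0 : ℝ) < d - 1 := by
    have : (3 : ℝ) ≤ d := by exact_mod_cast hd
    linarith
  obtain ⟨hρ, hρ1, hqρ⟩ := decay_rate_bounds hD hβ hβ'
  have hsymm : (((d : ℂ) - 1)⁻¹ • Matrix.toLpLin 2 2 (adjC G)).IsSymmetric :=
    (isSymmetric_toEuclideanLin_iff.mpr (adjC_isHermitian G)).smul (by simp)
  refine norm_lucasSeq_le hsymm hρ hqρ _ (fun μ u hu hua => ?_) n
  have hCu : adjC G *ᵥ u = ((((d : ℝ) - 1) * μ : ℝ) : ℂ) • u := by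
    have hd1 : (d : ℂ) - 1 ≠ 0 := by exact_mod_cast hD.ne'
    have h := congrArg (fun y => ((d : ℂ) - 1) • WithLp.ofLp y) hu
    simp only [LinearMap.smul_apply, WithLp.ofLp_smul, smul_smul, mul_inv_cancel₀ hd1, one_smul,
      Matrix.ofLp_toLpLin, Matrix.toLin'_apply] at h
    rw [h]
    push_cast
    rfl
  have hμ := norm_le_of_adjC_eigenvector G hreg hspec ha hCu hua
  rw [Complex.norm_real, Real.norm_eq_abs, abs_mul, abs_of_pos hD] at hμ
  have hμ' : |μ| ≤ ((d : ℝ) - 1 - β) / ((d : ℝ) - 1) + ((d : ℝ) - 1)⁻¹ := by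
    rw [show ((d : ℝ) - 1 - β) / ((d : ℝ) - 1) + ((d : ℝ) - 1)⁻¹ = (d - β) / (d - 1) by
      field_simp; ring, le_div_iff₀ hD]
    linarith
  nlinarith [mul_le_mul_of_nonneg_right hμ' hρ.le,
    mul_le_mul_of_nonneg_left hρ1 (inv_nonneg.mpr hD.le)]

end Graph

/-- Proposition 4 (`prop:vier`): if every eigenvalue `μ` of `C` with an eigenvector orthogonal
to the all-ones vector satisfies `|μ| ≤ d − β`, and `f = ∑_v a_v e_v` with `∑_v a_v = 0`, then
`‖M^t f‖ ≤ 2 ‖f‖ t ((d−1−β)/(d−1))^{t−1}` for all `t ≥ 1`. -/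
theorem evenly_distributed_decay {V : Type} [Fintype V] [DecidableEq V]
    (G : SimpleGraph V) [DecidableRel G.Adj]
    (d : ℕ) (hd : 3 ≤ d) (hreg : G.IsRegularOfDegree d)
    (β : ℝ) (hβ : 0 < β) (hβ' : β ≤ (d : ℝ) - 1 - Real.sqrt ((d : ℝ) - 1))
    (hspec : ∀ (μ : ℂ) (x : V → ℂ), x ≠ 0 → (adjC G).mulVec x = μ • x →
      (∑ v : V, x v) = 0 → ‖μ‖ ≤ (d : ℝ) - β)
    (a : V → ℂ) (ha : (∑ v : V, a v) = 0) :
    ∀ t : ℕ, 1 ≤ t →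
      ‖act ((transM G d) ^ t) (∑ v : V, a v • eVec G v)‖ ≤
        2 * ‖∑ v : V, a v • eVec G v‖ * (t : ℝ) *
          (((d : ℝ) - 1 - β) / ((d : ℝ) - 1)) ^ (t - 1) := by
  intro t ht
  obtain ⟨s, rfl⟩ : ∃ s, t = s + 1 := ⟨t - 1, by omega⟩
  have hD : (0 : ℝ) < d - 1 := by
    have : (3 : ℝ) ≤ d := by exact_mod_cast hd
    linarith
  obtain ⟨hρ, hρ1, hqρ⟩ := decay_rate_bounds hD hβ hβ'
  have hx := norm_adjSeq_le G hd hreg hβ hβ' hspec ha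
  have hq : ‖((d : ℂ) - 1)⁻¹‖ = ((d : ℝ) - 1)⁻¹ := by
    rw [norm_inv, ← Complex.ofReal_natCast, ← Complex.ofReal_one, ← Complex.ofReal_sub,
      Complex.norm_real, Real.norm_of_nonneg hD.le]
  set x := adjSeq G d (WithLp.toLp 2 a)
  calc ‖act (transM G d ^ (s + 1)) (∑ v, a v • eVec G v)‖
      = ‖headLift G (x (s + 1)) - ((d : ℂ) - 1)⁻¹ • tailLift G (x s)‖ := by
        rw [sum_smul_eVec, act_transM_pow_succ_tailLift G (by omega) hreg]
    _ ≤ √d * (‖x (s + 1)‖ + ((d : ℝ) - 1)⁻¹ * ‖x s‖) := by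
        refine (norm_sub_le _ _).trans_eq ?_
        rw [norm_smul, hq, norm_headLift, norm_tailLift G hreg, norm_tailLift G hreg]
        ring
    _ ≤ √d * (2 * ‖WithLp.toLp 2 a‖ * (s + 1 : ℕ) * (((d : ℝ) - 1 - β) / ((d : ℝ) - 1)) ^ s) := by
        gcongr
        exact add_mul_le_two_mul_pow hρ.le hρ1 (inv_nonneg.mpr hD.le) hqρ (norm_nonneg _)
          (by simpa only [Nat.add_sub_cancel] using hx (s + 1)) (hx s)
    _ = _ := by
        rw [sum_smul_eVec, norm_tailLift G hreg, Nat.add_sub_cancel]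
        ring
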